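/- Let Σ be a positive semi-definite d×d matrix with ordered eigenvalues λ₁ ≥ ... ≥ λ_d and orthonormal eigenvectors v₁,...,v_d, let E ⊂ ℝ^d be a subspace of dimension r (with r ≤ d), and let P_{E^⊥} be the orthogonal projection onto E^⊥. Suppose X is a centred random vector with covariance Σ and that sup_{u ∈ E^⊥ ∩ S^{d-1}} E⟨X,u⟩² ≤ κ₄ λ_r for some κ₄ ≥ 1. Then the trace of the covariance of P_{E^⊥}X satisfies tr(Σ_{E^⊥}) ≤ r·κ₄·λ_r + Σ_{i>r} λ_i. -/

import Mathlib

/-!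
Expanding in the eigenbasis, `tr Σ_{E^⊥} = ∑ⱼ λⱼ ‖P vⱼ‖²`, where `P` is the orthogonal projection
onto `E^⊥`. For `j ≥ r` simply `‖P vⱼ‖ ≤ 1`. For `j < r` the vector `w = P vⱼ` lies in `E^⊥` and
satisfies `⟪vⱼ, w⟫ = ‖w‖²`, so `λⱼ ‖w‖⁴ ≤ E⟪X, w⟫² ≤ κ₄ λ_r ‖w‖²`; hence each of the first `r`
terms is at most `κ₄ λ_r`.
-/

open MeasureTheory Finset
open scoped RealInnerProductSpace

section Uncorrelated

variable {Ω ι : Type*} [MeasurableSpace Ω] {μ : Measure Ω} [DecidableEq ι]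
  {f : ι → Ω → ℝ} {lam : ι → ℝ}

theorem nonneg_of_integral_mul_eq_ite
    (hcov : ∀ i j, ∫ ω, f i ω * f j ω ∂μ = if i = j then lam i else 0) (i : ι) :
    0 ≤ lam i := by
  have := integral_nonneg (μ := μ) (f := fun ω => f i ω * f i ω) fun ω => mul_self_nonneg _
  simpa [hcov] using this

theorem integral_sq_sum_of_integral_mul_eq_ite [Fintype ι]
    (hint : ∀ i j, Integrable (fun ω => f i ω * f j ω) μ)
    (hcov : ∀ i j, ∫ ω, f i ω * f j ω ∂μ = if i = j then lam i else 0) (c : ι → ℝ) :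
    ∫ ω, (∑ i, c i * f i ω) ^ 2 ∂μ = ∑ i, c i ^ 2 * lam i := by
  have hexpand : ∀ ω, (∑ i, c i * f i ω) ^ 2
      = ∑ i, ∑ j, c i * c j * (f i ω * f j ω) := fun ω => by
    rw [sq, sum_mul_sum]
    exact sum_congr rfl fun i _ => sum_congr rfl fun j _ => by ring
  simp_rw [hexpand]
  rw [integral_finsetSum _ fun i _ => integrable_finsetSum _ fun j _ => (hint i j).const_mul _]
  refine sum_congr rfl fun i _ => ?_
  rw [integral_finsetSum _ fun j _ => (hint i j).const_mul _]
  simp [integral_const_mul, hcov, sq]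

end Uncorrelated

section SecondMoment

variable {Ω ι F : Type*} [MeasurableSpace Ω] {μ : Measure Ω} [Fintype ι] [DecidableEq ι]
  [NormedAddCommGroup F] [InnerProductSpace ℝ F] {X : Ω → F}

theorem integral_inner_sq_le_mul_norm_sq {K : Submodule ℝ F} {C : ℝ}
    (hop : ∀ u ∈ K, ‖u‖ = 1 → ∫ ω, ⟪X ω, u⟫ ^ 2 ∂μ ≤ C) {w : F} (hw : w ∈ K) :
    ∫ ω, ⟪X ω, w⟫ ^ 2 ∂μ ≤ C * ‖w‖ ^ 2 := by
  rcases eq_or_ne w 0 with rfl | hw0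
  · simp
  have hu : ‖‖w‖⁻¹ • w‖ = 1 := by
    rw [norm_smul, norm_inv, norm_norm, inv_mul_cancel₀ (norm_ne_zero_iff.2 hw0)]
  have hw_eq : w = ‖w‖ • ‖w‖⁻¹ • w := by
    rw [smul_smul, mul_inv_cancel₀ (norm_ne_zero_iff.2 hw0), one_smul]
  calc ∫ ω, ⟪X ω, w⟫ ^ 2 ∂μ = ‖w‖ ^ 2 * ∫ ω, ⟪X ω, ‖w‖⁻¹ • w⟫ ^ 2 ∂μ := by
        rw [← integral_const_mul]
        congr 1 with ω
        conv_lhs => rw [hw_eq]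
        rw [real_inner_smul_right, mul_pow]
    _ ≤ ‖w‖ ^ 2 * C := by gcongr; exact hop _ (K.smul_mem _ hw) hu
    _ = C * ‖w‖ ^ 2 := mul_comm _ _

variable (b : OrthonormalBasis ι ℝ F) {lam : ι → ℝ}

theorem integral_inner_sq_eq_sum (hmem : ∀ u, MemLp (fun ω => ⟪X ω, u⟫) 2 μ)
    (hcov : ∀ i j, ∫ ω, ⟪X ω, b i⟫ * ⟪X ω, b j⟫ ∂μ = if i = j then lam i else 0) (w : F) :
    ∫ ω, ⟪X ω, w⟫ ^ 2 ∂μ = ∑ j, ⟪b j, w⟫ ^ 2 * lam j := by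
  have hint : ∀ i j, Integrable (fun ω => ⟪X ω, b i⟫ * ⟪X ω, b j⟫) μ :=
    fun i j => (hmem (b i)).integrable_mul (hmem (b j))
  have hexpand : ∀ ω, ⟪X ω, w⟫ = ∑ j, ⟪b j, w⟫ * ⟪X ω, b j⟫ := fun ω => by
    rw [← b.sum_inner_mul_inner (X ω) w]
    exact sum_congr rfl fun j _ => mul_comm _ _
  simp_rw [hexpand]
  exact integral_sq_sum_of_integral_mul_eq_ite hint hcov _

theorem sum_integral_inner_starProjection_sq (K : Submodule ℝ F) [K.HasOrthogonalProjection]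
    (hmem : ∀ u, MemLp (fun ω => ⟪X ω, u⟫) 2 μ)
    (hcov : ∀ i j, ∫ ω, ⟪X ω, b i⟫ * ⟪X ω, b j⟫ ∂μ = if i = j then lam i else 0) :
    ∑ i, ∫ ω, ⟪K.starProjection (X ω), b i⟫ ^ 2 ∂μ
      = ∑ j, lam j * ‖K.starProjection (b j)‖ ^ 2 := by
  simp_rw [K.inner_starProjection_left_eq_right, integral_inner_sq_eq_sum b hmem hcov]
  rw [sum_comm]
  refine sum_congr rfl fun j _ => ?_
  simp_rw [← K.inner_starProjection_left_eq_right, ← sum_mul, b.sum_sq_inner_left, mul_comm]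

theorem mul_norm_starProjection_sq_le (K : Submodule ℝ F) [K.HasOrthogonalProjection]
    (hmem : ∀ u, MemLp (fun ω => ⟪X ω, u⟫) 2 μ)
    (hcov : ∀ i j, ∫ ω, ⟪X ω, b i⟫ * ⟪X ω, b j⟫ ∂μ = if i = j then lam i else 0)
    {C : ℝ} (hC : 0 ≤ C) (hop : ∀ u ∈ K, ‖u‖ = 1 → ∫ ω, ⟪X ω, u⟫ ^ 2 ∂μ ≤ C) (j : ι) :
    lam j * ‖K.starProjection (b j)‖ ^ 2 ≤ C := by
  set w := K.starProjection (b j)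
  have hinner : ⟪b j, w⟫ = ‖w‖ ^ 2 := by
    rw [← real_inner_self_eq_norm_sq, ← sub_eq_zero, ← inner_sub_left]
    exact K.starProjection_inner_eq_zero _ _ (K.starProjection_apply_mem _)
  have hlam := nonneg_of_integral_mul_eq_ite hcov
  have hsq : lam j * (‖w‖ ^ 2) ^ 2 ≤ C * ‖w‖ ^ 2 :=
    calc lam j * (‖w‖ ^ 2) ^ 2 = ⟪b j, w⟫ ^ 2 * lam j := by rw [hinner, mul_comm]
      _ ≤ ∑ k, ⟪b k, w⟫ ^ 2 * lam k :=
        single_le_sum (f := fun k => ⟪b k, w⟫ ^ 2 * lam k)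
          (fun k _ => mul_nonneg (sq_nonneg _) (hlam k)) (mem_univ j)
      _ = ∫ ω, ⟪X ω, w⟫ ^ 2 ∂μ := (integral_inner_sq_eq_sum b hmem hcov w).symm
      _ ≤ C * ‖w‖ ^ 2 := integral_inner_sq_le_mul_norm_sq hop (K.starProjection_apply_mem _)
  rcases (sq_nonneg ‖w‖).eq_or_lt with h0 | hpos
  · rw [← h0, mul_zero]; exact hC
  · rw [sq (‖w‖ ^ 2), ← mul_assoc] at hsq
    exact le_of_mul_le_mul_right hsq hpos

end SecondMoment

theorem Fin.sum_le_mul_add_sum_filter {d r : ℕ} (hrd : r ≤ d) {f g : Fin d → ℝ} {C : ℝ}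
    (hlt : ∀ i : Fin d, (i : ℕ) < r → f i ≤ C) (hge : ∀ i : Fin d, r ≤ (i : ℕ) → f i ≤ g i) :
    ∑ i, f i ≤ r * C + ∑ i ∈ univ.filter (fun i : Fin d => r ≤ (i : ℕ)), g i := by
  rw [← sum_filter_not_add_sum_filter univ (fun i : Fin d => r ≤ (i : ℕ))]
  gcongr ?_ + ?_
  · calc ∑ i ∈ univ.filter (fun i : Fin d => ¬r ≤ (i : ℕ)), f i
          ≤ ∑ i ∈ univ.filter (fun i : Fin d => ¬r ≤ (i : ℕ)), C :=
          sum_le_sum fun i hi => hlt i (not_le.1 (mem_filter.1 hi).2)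
      _ = r * C := by simp_rw [not_le]; simp [Fin.card_filter_val_lt, hrd]
  · exact sum_le_sum fun i hi => hge i (mem_filter.1 hi).2

theorem stmt_5 {Ω : Type*} [MeasurableSpace Ω] (μ : Measure Ω)
    {d : ℕ} (X : Ω → EuclideanSpace ℝ (Fin d))
    (v : Fin d → EuclideanSpace ℝ (Fin d)) (hv : Orthonormal ℝ v)
    (lam : Fin d → ℝ)
    (hmem : ∀ u : EuclideanSpace ℝ (Fin d), MemLp (fun ω => (inner ℝ (X ω) u : ℝ)) 2 μ)
    (hcov : ∀ i j : Fin d,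
      (∫ ω, (inner ℝ (X ω) (v i) : ℝ) * (inner ℝ (X ω) (v j) : ℝ) ∂μ)
        = if i = j then lam i else 0)
    (E : Submodule ℝ (EuclideanSpace ℝ (Fin d))) (r : ℕ) (hr0 : 0 < r) (hrd : r ≤ d)
    (κ₄ : ℝ) (hκ₄ : 1 ≤ κ₄)
    (hop : ∀ u ∈ Eᗮ, ‖u‖ = 1 →
      (∫ ω, (inner ℝ (X ω) u : ℝ)^2 ∂μ) ≤ κ₄ * lam ⟨r - 1, by omega⟩) :
    ∑ i : Fin d,
        (∫ ω, (inner ℝ ((Submodule.orthogonalProjection Eᗮ (X ω) : EuclideanSpace ℝ (Fin d))) (v i) : ℝ)^2 ∂μ)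
      ≤ (r : ℝ) * κ₄ * lam ⟨r - 1, by omega⟩
        + ∑ i ∈ Finset.univ.filter (fun i : Fin d => r ≤ (i : ℕ)), lam i := by
  let b : OrthonormalBasis (Fin d) ℝ (EuclideanSpace ℝ (Fin d)) :=
    OrthonormalBasis.mk hv (hv.linearIndependent.span_eq_top_of_card_eq_finrank' (by simp)).ge
  have hb : ⇑b = v := OrthonormalBasis.coe_mk hv _
  rw [← hb] at hcov ⊢
  have hlam := nonneg_of_integral_mul_eq_ite hcov
  have hC : 0 ≤ κ₄ * lam ⟨r - 1, by omega⟩ := mul_nonneg (by linarith) (hlam _)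
  have hproj_le : ∀ j, ‖Eᗮ.starProjection (b j)‖ ^ 2 ≤ 1 := fun j =>
    pow_le_one₀ (norm_nonneg _) ((Eᗮ.norm_starProjection_apply_le _).trans_eq (b.norm_eq_one j))
  simp only [Submodule.coe_orthogonalProjectionOnto_apply]
  rw [sum_integral_inner_starProjection_sq b Eᗮ hmem hcov, mul_assoc]
  exact Fin.sum_le_mul_add_sum_filter hrd
    (fun j _ => mul_norm_starProjection_sq_le b Eᗮ hmem hcov hC hop j)
    (fun j _ => mul_le_of_le_one_right (hlam j) (hproj_le j))
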